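/- Let y ∈ ℝⁿ and λ_F ≥ 0, λ_L ≥ 0, and let 0 ≤ λ_NI < λ_NI*. If the unique minimizer of the one-dimensional fused lasso nearly-isotonic objective satisfies β̂(y, λ_F, λ_L, λ_NI)_i = β̂(y, λ_F, λ_L, λ_NI)_{i+1} for some index 1 ≤ i ≤ n−1, then also β̂(y, λ_F, λ_L, λ_NI*)_i = β̂(y, λ_F, λ_L, λ_NI*)_{i+1}; that is, increasing the nearly-isotonic parameter λ_NI can only join constant regions of the solution, not split them. -/
import Mathlib


open Finset

/-- The one-dimensional fused lasso nearly-isotonic objective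
`F(β) = (1/2)Σᵢ(yᵢ−βᵢ)² + λ_F Σᵢ|βᵢ−βᵢ₊₁| + λ_L Σᵢ|βᵢ| + λ_NI Σᵢ max(βᵢ−βᵢ₊₁,0)`. -/
noncomputable def flni1 {n : ℕ} (y : Fin (n + 1) → ℝ) (lF lL lNI : ℝ)
    (β : Fin (n + 1) → ℝ) : ℝ :=
  (1 / 2) * ∑ i, (y i - β i) ^ 2
    + lF * ∑ i : Fin n, |β i.castSucc - β i.succ|
    + lL * ∑ i, |β i|
    + lNI * ∑ i : Fin n, max (β i.castSucc - β i.succ) 0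

namespace NIJoin

noncomputable def sp (x : ℝ) : ℝ := if 0 ≤ x then 1 else -1
noncomputable def sm (x : ℝ) : ℝ := if x ≤ 0 then -1 else 1
noncomputable def pp (x : ℝ) : ℝ := if 0 ≤ x then 1 else 0
noncomputable def pm (x : ℝ) : ℝ := if x ≤ 0 then 0 else 1
noncomputable def thrP (x : ℝ) : ℝ := if x < 0 then -x else 1
noncomputable def thrM (x : ℝ) : ℝ := if 0 < x then x else 1

lemma thrP_pos (x : ℝ) : 0 < thrP x := by
  unfold thrP; split <;> [linarith; norm_num]

lemma thrM_pos (x : ℝ) : 0 < thrM x := by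
  unfold thrM; split <;> [linarith; norm_num]

lemma sp_le_one (x : ℝ) : sp x ≤ 1 := by unfold sp; split <;> norm_num
lemma neg_one_le_sm (x : ℝ) : -1 ≤ sm x := by unfold sm; split <;> norm_num
lemma pp_le_one (x : ℝ) : pp x ≤ 1 := by unfold pp; split <;> norm_num
lemma pp_nonneg (x : ℝ) : 0 ≤ pp x := by unfold pp; split <;> norm_num
lemma pm_nonneg (x : ℝ) : 0 ≤ pm x := by unfold pm; split <;> norm_num
lemma pm_le_one (x : ℝ) : pm x ≤ 1 := by unfold pm; split <;> norm_num
lemma sm_le_sp (x : ℝ) : sm x ≤ sp x := by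
  by_cases h1 : x ≤ 0 <;> by_cases h2 : 0 ≤ x <;>
    simp [sm, sp, h1, h2] <;> linarith
lemma pm_le_pp (x : ℝ) : pm x ≤ pp x := by
  by_cases h1 : x ≤ 0 <;> by_cases h2 : 0 ≤ x <;>
    simp [pm, pp, h1, h2] <;> linarith

lemma sp_one {x : ℝ} (h : 0 ≤ x) : sp x = 1 := if_pos h
lemma sm_one {x : ℝ} (h : 0 < x) : sm x = 1 := if_neg (by linarith)
lemma pp_one {x : ℝ} (h : 0 ≤ x) : pp x = 1 := if_pos h
lemma pm_one {x : ℝ} (h : 0 < x) : pm x = 1 := if_neg (by linarith)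
lemma sp_neg {x : ℝ} (h : x < 0) : sp x = -1 := if_neg (by linarith)
lemma sm_neg {x : ℝ} (h : x ≤ 0) : sm x = -1 := if_pos h
lemma pp_zero {x : ℝ} (h : x < 0) : pp x = 0 := if_neg (by linarith)
lemma pm_zero {x : ℝ} (h : x ≤ 0) : pm x = 0 := if_pos h

/-- monotonicity: if x > x' then sm x ≥ sp x'. -/
lemma sp_le_sm {x x' : ℝ} (h : x' < x) : sp x' ≤ sm x := by
  unfold sp sm
  by_cases h1 : 0 ≤ x' <;> by_cases h2 : x ≤ 0 <;>
    simp [h1, h2] <;> linarith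

lemma abs_add_eps {x ε : ℝ} (h0 : 0 < ε) (h1 : ε ≤ thrP x) :
    |x + ε| = |x| + ε * sp x := by
  unfold thrP at h1
  by_cases hx : 0 ≤ x
  · rw [sp_one hx, abs_of_nonneg hx, abs_of_nonneg (by linarith)]; ring
  · push_neg at hx
    rw [if_pos hx] at h1
    rw [sp_neg hx, abs_of_neg hx, abs_of_nonpos (by linarith)]; ring

lemma abs_sub_eps {x ε : ℝ} (h0 : 0 < ε) (h1 : ε ≤ thrM x) :
    |x - ε| = |x| - ε * sm x := by
  unfold thrM at h1
  by_cases hx : 0 < x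
  · rw [if_pos hx] at h1
    rw [sm_one hx, abs_of_pos hx, abs_of_nonneg (by linarith)]; ring
  · push_neg at hx
    rw [sm_neg hx, abs_of_nonpos hx, abs_of_nonpos (by linarith)]; ring

lemma pos_add_eps {x ε : ℝ} (h0 : 0 < ε) (h1 : ε ≤ thrP x) :
    max (x + ε) 0 = max x 0 + ε * pp x := by
  unfold thrP at h1
  by_cases hx : 0 ≤ x
  · rw [pp_one hx, max_eq_left hx, max_eq_left (by linarith)]; ring
  · push_neg at hx
    rw [if_pos hx] at h1
    rw [pp_zero hx, max_eq_right hx.le, max_eq_right (by linarith)]; ring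

lemma pos_sub_eps {x ε : ℝ} (h0 : 0 < ε) (h1 : ε ≤ thrM x) :
    max (x - ε) 0 = max x 0 - ε * pm x := by
  unfold thrM at h1
  by_cases hx : 0 < x
  · rw [if_pos hx] at h1
    rw [pm_one hx, max_eq_left hx.le, max_eq_left (by linarith)]; ring
  · push_neg at hx
    rw [pm_zero hx, max_eq_right hx, max_eq_right (by linarith)]; ring

lemma nonneg_of_linear {L c ε₀ : ℝ} (hc : 0 ≤ c) (hε₀ : 0 < ε₀)
    (h : ∀ ε : ℝ, 0 < ε → ε ≤ ε₀ → 0 ≤ ε * L + ε ^ 2 * c) : 0 ≤ L := by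
  by_contra hL
  push_neg at hL
  set ε := min ε₀ (-L / (2 * c + 1)) with hε
  have hεpos : 0 < ε := lt_min hε₀ (by apply div_pos <;> linarith)
  have h1 : ε ≤ -L / (2 * c + 1) := min_le_right _ _
  have h2 : ε * c ≤ -L / 2 := by
    have : ε * c ≤ (-L / (2 * c + 1)) * c := by nlinarith
    have h3 : (-L / (2 * c + 1)) * c ≤ -L / 2 := by
      rw [div_mul_eq_mul_div, div_le_div_iff₀ (by linarith) (by norm_num)]
      nlinarith
    linarith
  have := h ε hεpos (min_le_left _ _)
  nlinarith [sq_nonneg ε]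


noncomputable def Gob (n : ℕ) (Y : ℕ → ℝ) (lF lL lNI : ℝ) (B : ℕ → ℝ) : ℝ :=
  (1/2) * ∑ t ∈ range (n+1), (Y t - B t)^2
  + lF * ∑ t ∈ range n, |B t - B (t+1)|
  + lL * ∑ t ∈ range (n+1), |B t|
  + lNI * ∑ t ∈ range n, max (B t - B (t+1)) 0

lemma Gob_congr (n : ℕ) (Y : ℕ → ℝ) (lF lL lNI : ℝ) (B₁ B₂ : ℕ → ℝ)
    (h : ∀ t, t ≤ n → B₁ t = B₂ t) :
    Gob n Y lF lL lNI B₁ = Gob n Y lF lL lNI B₂ := by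
  unfold Gob
  congr 1
  · congr 1
    · congr 1
      · congr 1
        refine Finset.sum_congr rfl fun t ht => ?_
        rw [h t (by simpa [Nat.lt_succ_iff] using mem_range.1 ht)]
      · congr 1
        refine Finset.sum_congr rfl fun t ht => ?_
        have ht' := mem_range.1 ht
        rw [h t (by omega), h (t+1) (by omega)]
    · congr 1
      refine Finset.sum_congr rfl fun t ht => ?_
      rw [h t (by simpa [Nat.lt_succ_iff] using mem_range.1 ht)]
  · congr 1
    refine Finset.sum_congr rfl fun t ht => ?_
    have ht' := mem_range.1 ht
    rw [h t (by omega), h (t+1) (by omega)]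


noncomputable def ext {n : ℕ} (v : Fin (n+1) → ℝ) : ℕ → ℝ :=
  fun t => if h : t < n+1 then v ⟨t, h⟩ else 0

lemma ext_val {n : ℕ} (v : Fin (n+1) → ℝ) (i : Fin (n+1)) : ext v i.val = v i := by
  simp [ext, i.isLt]

lemma ext_castSucc {n : ℕ} (v : Fin (n+1) → ℝ) (i : Fin n) :
    ext v i.val = v i.castSucc := by
  have : (i.castSucc : ℕ) = i.val := rfl
  rw [← this, ext_val]

lemma ext_succ {n : ℕ} (v : Fin (n+1) → ℝ) (i : Fin n) :
    ext v (i.val + 1) = v i.succ := by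
  have : (i.succ : ℕ) = i.val + 1 := rfl
  rw [← this, ext_val]

lemma flni1_eq_Gob {n : ℕ} (y : Fin (n+1) → ℝ) (lF lL lNI : ℝ) (β : Fin (n+1) → ℝ) :
    flni1 y lF lL lNI β = Gob n (ext y) lF lL lNI (ext β) := by
  unfold flni1 Gob
  rw [show (1:ℝ)/2 = 1/2 from rfl]
  congr 1
  · congr 1
    · congr 1
      · congr 1
        rw [← Fin.sum_univ_eq_sum_range (fun t => (ext y t - ext β t)^2) (n+1)]
        exact Finset.sum_congr rfl fun i _ => by rw [ext_val, ext_val]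
      · congr 1
        rw [← Fin.sum_univ_eq_sum_range (fun t => |ext β t - ext β (t+1)|) n]
        exact Finset.sum_congr rfl fun i _ => by rw [ext_castSucc, ext_succ]
    · congr 1
      rw [← Fin.sum_univ_eq_sum_range (fun t => |ext β t|) (n+1)]
      exact Finset.sum_congr rfl fun i _ => by rw [ext_val]
  · congr 1
    rw [← Fin.sum_univ_eq_sum_range (fun t => max (ext β t - ext β (t+1)) 0) n]
    exact Finset.sum_congr rfl fun i _ => by rw [ext_castSucc, ext_succ]


noncomputable def dnE (Y B : ℕ → ℝ) (lL : ℝ) (t : ℕ) : ℝ := Y t - B t - lL * sp (B t)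
noncomputable def upE (Y B : ℕ → ℝ) (lL : ℝ) (t : ℕ) : ℝ := Y t - B t - lL * sm (B t)
noncomputable def AmV (n : ℕ) (B : ℕ → ℝ) (lF lNI : ℝ) (k : ℕ) : ℝ :=
  if 1 ≤ k ∧ k ≤ n then lF * sm (B (k-1) - B k) + lNI * pm (B (k-1) - B k) else 0
noncomputable def ApV (n : ℕ) (B : ℕ → ℝ) (lF lNI : ℝ) (k : ℕ) : ℝ :=
  if 1 ≤ k ∧ k ≤ n then lF * sp (B (k-1) - B k) + lNI * pp (B (k-1) - B k) else 0

theorem cond_up (n : ℕ) (Y B : ℕ → ℝ) (lF lL lNI : ℝ)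
    (hmin : ∀ C : ℕ → ℝ, Gob n Y lF lL lNI B ≤ Gob n Y lF lL lNI C)
    (j k : ℕ) (hjk : j ≤ k) (hk : k ≤ n) :
    0 ≤ -(∑ t ∈ Icc j k, dnE Y B lL t) - AmV n B lF lNI j + ApV n B lF lNI (k+1) := by
  classical
  set I := Icc j k with hI
  have hne : I.Nonempty := ⟨j, mem_Icc.2 ⟨le_refl _, hjk⟩⟩
  have hI_sub : I ⊆ range (n+1) := by
    intro t ht; rw [mem_range]; have := (mem_Icc.1 ht).2; omega
  set e1 : ℝ := if j = 0 then 1 else thrM (B (j-1) - B j) with he1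
  set e2 : ℝ := if k < n then thrP (B k - B (k+1)) else 1 with he2
  set e3 : ℝ := I.inf' hne (fun t => thrP (B t)) with he3
  set ε₀ : ℝ := min (min e1 e2) e3 with hε₀def
  have he1pos : 0 < e1 := by
    rw [he1]; split
    · norm_num
    · exact thrM_pos _
  have he2pos : 0 < e2 := by
    rw [he2]; split
    · exact thrP_pos _
    · norm_num
  have he3pos : 0 < e3 := by
    rw [he3, Finset.lt_inf'_iff]; exact fun t _ => thrP_pos _
  have hε₀pos : 0 < ε₀ := lt_min (lt_min he1pos he2pos) he3pos
  -- rewrite AmV / ApV in if-form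
  have hAmj : AmV n B lF lNI j
      = (if j = 0 then 0 else lF * sm (B (j-1) - B j) + lNI * pm (B (j-1) - B j)) := by
    unfold AmV
    by_cases hj0 : j = 0
    · simp [hj0]
    · rw [if_pos ⟨by omega, by omega⟩, if_neg hj0]
  have hApk : ApV n B lF lNI (k+1)
      = (if k < n then lF * sp (B k - B (k+1)) + lNI * pp (B k - B (k+1)) else 0) := by
    unfold ApV
    by_cases hkn : k < n
    · rw [if_pos ⟨by omega, by omega⟩, if_pos hkn]
      norm_num
    · rw [if_neg (by omega : ¬ (1 ≤ k + 1 ∧ k + 1 ≤ n)), if_neg hkn]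
  set L : ℝ := -(∑ t ∈ I, dnE Y B lL t) - AmV n B lF lNI j + ApV n B lF lNI (k+1) with hL
  refine nonneg_of_linear (c := (I.card : ℝ)/2) (by positivity) hε₀pos ?_
  intro ε hεpos hεle
  have hεe1 : ε ≤ e1 := le_trans hεle (le_trans (min_le_left _ _) (min_le_left _ _))
  have hεe2 : ε ≤ e2 := le_trans hεle (le_trans (min_le_left _ _) (min_le_right _ _))
  have hεe3 : ∀ t ∈ I, ε ≤ thrP (B t) := fun t ht =>
    le_trans hεle (le_trans (min_le_right _ _) (Finset.inf'_le _ ht))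
  set C : ℕ → ℝ := fun t => if t ∈ I then B t + ε else B t with hCdef
  have hCin : ∀ t ∈ I, C t = B t + ε := fun t ht => by simp [hCdef, ht]
  have hCout : ∀ t, t ∉ I → C t = B t := fun t ht => by simp [hCdef, ht]
  -- quadratic part
  have hq : ∑ t ∈ range (n+1), ((Y t - C t)^2 - (Y t - B t)^2)
      = ε^2 * I.card - 2*ε*(∑ t ∈ I, (Y t - B t)) := by
    have h0 : ∑ t ∈ I, ((Y t - C t)^2 - (Y t - B t)^2)
        = ∑ t ∈ range (n+1), ((Y t - C t)^2 - (Y t - B t)^2) :=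
      Finset.sum_subset hI_sub (fun t _ ht => by rw [hCout t ht]; ring)
    rw [← h0]
    calc ∑ t ∈ I, ((Y t - C t)^2 - (Y t - B t)^2)
        = ∑ t ∈ I, (ε^2 - 2*ε*(Y t - B t)) :=
          Finset.sum_congr rfl fun t ht => by rw [hCin t ht]; ring
      _ = ε^2 * I.card - 2*ε*(∑ t ∈ I, (Y t - B t)) := by
          rw [Finset.sum_sub_distrib, Finset.sum_const, nsmul_eq_mul, ← Finset.mul_sum]
          ring
  -- lasso part
  have hl : ∑ t ∈ range (n+1), (|C t| - |B t|) = ε * ∑ t ∈ I, sp (B t) := by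
    have h0 : ∑ t ∈ I, (|C t| - |B t|) = ∑ t ∈ range (n+1), (|C t| - |B t|) :=
      Finset.sum_subset hI_sub (fun t _ ht => by rw [hCout t ht]; ring)
    rw [← h0, Finset.mul_sum]
    refine Finset.sum_congr rfl fun t ht => ?_
    rw [hCin t ht, abs_add_eps hεpos (hεe3 t ht)]; ring
  -- membership helpers
  have hmem : ∀ t : ℕ, t + 1 ≠ j → t ≠ k → (C t - C (t+1) = B t - B (t+1)) := by
    intro t h1 h2
    by_cases htI : t ∈ I
    · have h3 := mem_Icc.1 htI
      have : t + 1 ∈ I := mem_Icc.2 ⟨by omega, by omega⟩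
      rw [hCin t htI, hCin _ this]; ring
    · have : t + 1 ∉ I := by
        intro hc; have h3 := mem_Icc.1 hc
        rw [hI, mem_Icc] at htI
        exact htI ⟨by omega, by omega⟩
      rw [hCout t htI, hCout _ this]
  have hjmem : ∀ t : ℕ, t + 1 = j → C t = B t ∧ C (t+1) = B (t+1) + ε := by
    intro t h1
    constructor
    · exact hCout t (by rw [hI, mem_Icc]; omega)
    · exact hCin _ (mem_Icc.2 ⟨by omega, by omega⟩)
  have hkmemIn : C k = B k + ε := hCin _ (mem_Icc.2 ⟨hjk, le_refl _⟩)
  have hkmemOut : k < n → C (k+1) = B (k+1) := fun _ =>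
    hCout _ (by rw [hI, mem_Icc]; omega)
  have hεj : j ≠ 0 → ε ≤ thrM (B (j-1) - B j) := by
    intro h0; rw [he1, if_neg h0] at hεe1; exact hεe1
  have hεk : k < n → ε ≤ thrP (B k - B (k+1)) := by
    intro h0; rw [he2, if_pos h0] at hεe2; exact hεe2
  -- fused pair part
  have hf : ∑ t ∈ range n, (|C t - C (t+1)| - |B t - B (t+1)|)
      = (if j = 0 then 0 else -(ε * sm (B (j-1) - B j)))
        + (if k < n then ε * sp (B k - B (k+1)) else 0) := by
    have hpt : ∀ t ∈ range n, (|C t - C (t+1)| - |B t - B (t+1)|)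
        = (if t + 1 = j then -(ε * sm (B t - B (t+1))) else 0)
          + (if t = k then ε * sp (B t - B (t+1)) else 0) := by
      intro t ht
      by_cases h1 : t + 1 = j
      · have h2 : t ≠ k := by omega
        rw [if_pos h1, if_neg h2]
        obtain ⟨hc1, hc2⟩ := hjmem t h1
        have h' := hεj (by omega)
        rw [show j - 1 = t by omega, ← h1] at h'
        rw [hc1, hc2, show B t - (B (t+1) + ε) = B t - B (t+1) - ε by ring,
          abs_sub_eps hεpos h']
        ring
      · by_cases h2 : t = k
        · have hkn : k < n := h2 ▸ mem_range.1 ht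
          rw [if_neg h1, if_pos h2, h2]
          rw [hkmemIn, hkmemOut hkn, show B k + ε - B (k+1) = B k - B (k+1) + ε by ring,
            abs_add_eps hεpos (hεk hkn)]
          ring
        · rw [if_neg h1, if_neg h2, hmem t h1 h2]; ring
    rw [Finset.sum_congr rfl hpt, Finset.sum_add_distrib]
    congr 1
    · cases j with
      | zero => simp
      | succ j' =>
        have hj'n : j' ∈ range n := mem_range.2 (by omega)
        rw [if_neg (by omega : ¬ j' + 1 = 0)]
        have : ∀ t ∈ range n, (if t + 1 = j' + 1 then -(ε * sm (B t - B (t+1))) else 0)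
            = (if t = j' then -(ε * sm (B t - B (t+1))) else 0) := by
          intro t _
          by_cases h : t = j'
          · rw [if_pos (by omega), if_pos h]
          · rw [if_neg (by omega), if_neg h]
        rw [Finset.sum_congr rfl this, Finset.sum_ite_eq' (range n) j', if_pos hj'n]
        norm_num
    · rw [Finset.sum_ite_eq' (range n) k]
      by_cases hkn : k < n
      · rw [if_pos (mem_range.2 hkn), if_pos hkn]
      · rw [if_neg (by simpa [mem_range] using hkn), if_neg hkn]
  -- nearly-isotonic pair part
  have hni : ∑ t ∈ range n, (max (C t - C (t+1)) 0 - max (B t - B (t+1)) 0)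
      = (if j = 0 then 0 else -(ε * pm (B (j-1) - B j)))
        + (if k < n then ε * pp (B k - B (k+1)) else 0) := by
    have hpt : ∀ t ∈ range n, (max (C t - C (t+1)) 0 - max (B t - B (t+1)) 0)
        = (if t + 1 = j then -(ε * pm (B t - B (t+1))) else 0)
          + (if t = k then ε * pp (B t - B (t+1)) else 0) := by
      intro t ht
      by_cases h1 : t + 1 = j
      · have h2 : t ≠ k := by omega
        rw [if_pos h1, if_neg h2]
        obtain ⟨hc1, hc2⟩ := hjmem t h1
        have h' := hεj (by omega)
        rw [show j - 1 = t by omega, ← h1] at h'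
        rw [hc1, hc2, show B t - (B (t+1) + ε) = B t - B (t+1) - ε by ring,
          pos_sub_eps hεpos h']
        ring
      · by_cases h2 : t = k
        · have hkn : k < n := h2 ▸ mem_range.1 ht
          rw [if_neg h1, if_pos h2, h2]
          rw [hkmemIn, hkmemOut hkn, show B k + ε - B (k+1) = B k - B (k+1) + ε by ring,
            pos_add_eps hεpos (hεk hkn)]
          ring
        · rw [if_neg h1, if_neg h2, hmem t h1 h2]; ring
    rw [Finset.sum_congr rfl hpt, Finset.sum_add_distrib]
    congr 1
    · cases j with
      | zero => simp
      | succ j' =>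
        have hj'n : j' ∈ range n := mem_range.2 (by omega)
        rw [if_neg (by omega : ¬ j' + 1 = 0)]
        have : ∀ t ∈ range n, (if t + 1 = j' + 1 then -(ε * pm (B t - B (t+1))) else 0)
            = (if t = j' then -(ε * pm (B t - B (t+1))) else 0) := by
          intro t _
          by_cases h : t = j'
          · rw [if_pos (by omega), if_pos h]
          · rw [if_neg (by omega), if_neg h]
        rw [Finset.sum_congr rfl this, Finset.sum_ite_eq' (range n) j', if_pos hj'n]
        norm_num
    · rw [Finset.sum_ite_eq' (range n) k]
      by_cases hkn : k < n
      · rw [if_pos (mem_range.2 hkn), if_pos hkn]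
      · rw [if_neg (by simpa [mem_range] using hkn), if_neg hkn]
  -- assemble
  have expand : Gob n Y lF lL lNI C - Gob n Y lF lL lNI B
      = (1/2) * (∑ t ∈ range (n+1), ((Y t - C t)^2 - (Y t - B t)^2))
        + lF * (∑ t ∈ range n, (|C t - C (t+1)| - |B t - B (t+1)|))
        + lL * (∑ t ∈ range (n+1), (|C t| - |B t|))
        + lNI * (∑ t ∈ range n, (max (C t - C (t+1)) 0 - max (B t - B (t+1)) 0)) := by
    unfold Gob
    rw [Finset.sum_sub_distrib, Finset.sum_sub_distrib, Finset.sum_sub_distrib,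
      Finset.sum_sub_distrib]
    ring
  have hsum : ∑ t ∈ I, dnE Y B lL t
      = (∑ t ∈ I, (Y t - B t)) - lL * ∑ t ∈ I, sp (B t) := by
    rw [Finset.mul_sum, ← Finset.sum_sub_distrib]
    exact Finset.sum_congr rfl fun t _ => by unfold dnE; ring
  have key : Gob n Y lF lL lNI C - Gob n Y lF lL lNI B = ε * L + ε^2 * ((I.card : ℝ)/2) := by
    rw [expand, hq, hl, hf, hni, hL, hAmj, hApk, hsum]
    by_cases hj0 : j = 0 <;> by_cases hkn : k < n <;>
      simp only [if_pos, if_neg, hj0, hkn, if_true, if_false] <;> ring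
  have h0 := hmin C
  linarith [key]


theorem cond_dn (n : ℕ) (Y B : ℕ → ℝ) (lF lL lNI : ℝ)
    (hmin : ∀ C : ℕ → ℝ, Gob n Y lF lL lNI B ≤ Gob n Y lF lL lNI C)
    (j k : ℕ) (hjk : j ≤ k) (hk : k ≤ n) :
    0 ≤ (∑ t ∈ Icc j k, upE Y B lL t) + ApV n B lF lNI j - AmV n B lF lNI (k+1) := by
  classical
  set I := Icc j k with hI
  have hne : I.Nonempty := ⟨j, mem_Icc.2 ⟨le_refl _, hjk⟩⟩
  have hI_sub : I ⊆ range (n+1) := by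
    intro t ht; rw [mem_range]; have := (mem_Icc.1 ht).2; omega
  set e1 : ℝ := if j = 0 then 1 else thrP (B (j-1) - B j) with he1
  set e2 : ℝ := if k < n then thrM (B k - B (k+1)) else 1 with he2
  set e3 : ℝ := I.inf' hne (fun t => thrM (B t)) with he3
  set ε₀ : ℝ := min (min e1 e2) e3 with hε₀def
  have he1pos : 0 < e1 := by
    rw [he1]; split
    · norm_num
    · exact thrP_pos _
  have he2pos : 0 < e2 := by
    rw [he2]; split
    · exact thrM_pos _
    · norm_num
  have he3pos : 0 < e3 := by
    rw [he3, Finset.lt_inf'_iff]; exact fun t _ => thrM_pos _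
  have hε₀pos : 0 < ε₀ := lt_min (lt_min he1pos he2pos) he3pos
  have hApj : ApV n B lF lNI j
      = (if j = 0 then 0 else lF * sp (B (j-1) - B j) + lNI * pp (B (j-1) - B j)) := by
    unfold ApV
    by_cases hj0 : j = 0
    · simp [hj0]
    · rw [if_pos ⟨by omega, by omega⟩, if_neg hj0]
  have hAmk : AmV n B lF lNI (k+1)
      = (if k < n then lF * sm (B k - B (k+1)) + lNI * pm (B k - B (k+1)) else 0) := by
    unfold AmV
    by_cases hkn : k < n
    · rw [if_pos ⟨by omega, by omega⟩, if_pos hkn]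
      norm_num
    · rw [if_neg (by omega : ¬ (1 ≤ k + 1 ∧ k + 1 ≤ n)), if_neg hkn]
  set L : ℝ := (∑ t ∈ I, upE Y B lL t) + ApV n B lF lNI j - AmV n B lF lNI (k+1) with hL
  refine nonneg_of_linear (c := (I.card : ℝ)/2) (by positivity) hε₀pos ?_
  intro ε hεpos hεle
  have hεe1 : ε ≤ e1 := le_trans hεle (le_trans (min_le_left _ _) (min_le_left _ _))
  have hεe2 : ε ≤ e2 := le_trans hεle (le_trans (min_le_left _ _) (min_le_right _ _))
  have hεe3 : ∀ t ∈ I, ε ≤ thrM (B t) := fun t ht =>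
    le_trans hεle (le_trans (min_le_right _ _) (Finset.inf'_le _ ht))
  set C : ℕ → ℝ := fun t => if t ∈ I then B t - ε else B t with hCdef
  have hCin : ∀ t ∈ I, C t = B t - ε := fun t ht => by simp [hCdef, ht]
  have hCout : ∀ t, t ∉ I → C t = B t := fun t ht => by simp [hCdef, ht]
  have hq : ∑ t ∈ range (n+1), ((Y t - C t)^2 - (Y t - B t)^2)
      = ε^2 * I.card + 2*ε*(∑ t ∈ I, (Y t - B t)) := by
    have h0 : ∑ t ∈ I, ((Y t - C t)^2 - (Y t - B t)^2)
        = ∑ t ∈ range (n+1), ((Y t - C t)^2 - (Y t - B t)^2) :=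
      Finset.sum_subset hI_sub (fun t _ ht => by rw [hCout t ht]; ring)
    rw [← h0]
    calc ∑ t ∈ I, ((Y t - C t)^2 - (Y t - B t)^2)
        = ∑ t ∈ I, (ε^2 + 2*ε*(Y t - B t)) :=
          Finset.sum_congr rfl fun t ht => by rw [hCin t ht]; ring
      _ = ε^2 * I.card + 2*ε*(∑ t ∈ I, (Y t - B t)) := by
          rw [Finset.sum_add_distrib, Finset.sum_const, nsmul_eq_mul, ← Finset.mul_sum]
          ring
  have hl : ∑ t ∈ range (n+1), (|C t| - |B t|) = -(ε * ∑ t ∈ I, sm (B t)) := by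
    have h0 : ∑ t ∈ I, (|C t| - |B t|) = ∑ t ∈ range (n+1), (|C t| - |B t|) :=
      Finset.sum_subset hI_sub (fun t _ ht => by rw [hCout t ht]; ring)
    rw [← h0, Finset.mul_sum, ← Finset.sum_neg_distrib]
    refine Finset.sum_congr rfl fun t ht => ?_
    rw [hCin t ht, abs_sub_eps hεpos (hεe3 t ht)]; ring
  have hmem : ∀ t : ℕ, t + 1 ≠ j → t ≠ k → (C t - C (t+1) = B t - B (t+1)) := by
    intro t h1 h2
    by_cases htI : t ∈ I
    · have h3 := mem_Icc.1 htI
      have : t + 1 ∈ I := mem_Icc.2 ⟨by omega, by omega⟩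
      rw [hCin t htI, hCin _ this]; ring
    · have : t + 1 ∉ I := by
        intro hc; have h3 := mem_Icc.1 hc
        rw [hI, mem_Icc] at htI
        exact htI ⟨by omega, by omega⟩
      rw [hCout t htI, hCout _ this]
  have hjmem : ∀ t : ℕ, t + 1 = j → C t = B t ∧ C (t+1) = B (t+1) - ε := by
    intro t h1
    constructor
    · exact hCout t (by rw [hI, mem_Icc]; omega)
    · exact hCin _ (mem_Icc.2 ⟨by omega, by omega⟩)
  have hkmemIn : C k = B k - ε := hCin _ (mem_Icc.2 ⟨hjk, le_refl _⟩)
  have hkmemOut : k < n → C (k+1) = B (k+1) := fun _ =>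
    hCout _ (by rw [hI, mem_Icc]; omega)
  have hεj : j ≠ 0 → ε ≤ thrP (B (j-1) - B j) := by
    intro h0; rw [he1, if_neg h0] at hεe1; exact hεe1
  have hεk : k < n → ε ≤ thrM (B k - B (k+1)) := by
    intro h0; rw [he2, if_pos h0] at hεe2; exact hεe2
  have hf : ∑ t ∈ range n, (|C t - C (t+1)| - |B t - B (t+1)|)
      = (if j = 0 then 0 else ε * sp (B (j-1) - B j))
        + (if k < n then -(ε * sm (B k - B (k+1))) else 0) := by
    have hpt : ∀ t ∈ range n, (|C t - C (t+1)| - |B t - B (t+1)|)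
        = (if t + 1 = j then ε * sp (B t - B (t+1)) else 0)
          + (if t = k then -(ε * sm (B t - B (t+1))) else 0) := by
      intro t ht
      by_cases h1 : t + 1 = j
      · have h2 : t ≠ k := by omega
        rw [if_pos h1, if_neg h2]
        obtain ⟨hc1, hc2⟩ := hjmem t h1
        have h' := hεj (by omega)
        rw [show j - 1 = t by omega, ← h1] at h'
        rw [hc1, hc2, show B t - (B (t+1) - ε) = B t - B (t+1) + ε by ring,
          abs_add_eps hεpos h']
        ring
      · by_cases h2 : t = k
        · have hkn : k < n := h2 ▸ mem_range.1 ht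
          rw [if_neg h1, if_pos h2, h2]
          rw [hkmemIn, hkmemOut hkn, show B k - ε - B (k+1) = B k - B (k+1) - ε by ring,
            abs_sub_eps hεpos (hεk hkn)]
          ring
        · rw [if_neg h1, if_neg h2, hmem t h1 h2]; ring
    rw [Finset.sum_congr rfl hpt, Finset.sum_add_distrib]
    congr 1
    · cases j with
      | zero => simp
      | succ j' =>
        have hj'n : j' ∈ range n := mem_range.2 (by omega)
        rw [if_neg (by omega : ¬ j' + 1 = 0)]
        have : ∀ t ∈ range n, (if t + 1 = j' + 1 then ε * sp (B t - B (t+1)) else 0)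
            = (if t = j' then ε * sp (B t - B (t+1)) else 0) := by
          intro t _
          by_cases h : t = j'
          · rw [if_pos (by omega), if_pos h]
          · rw [if_neg (by omega), if_neg h]
        rw [Finset.sum_congr rfl this, Finset.sum_ite_eq' (range n) j', if_pos hj'n]
        norm_num
    · rw [Finset.sum_ite_eq' (range n) k]
      by_cases hkn : k < n
      · rw [if_pos (mem_range.2 hkn), if_pos hkn]
      · rw [if_neg (by simpa [mem_range] using hkn), if_neg hkn]
  have hni : ∑ t ∈ range n, (max (C t - C (t+1)) 0 - max (B t - B (t+1)) 0)
      = (if j = 0 then 0 else ε * pp (B (j-1) - B j))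
        + (if k < n then -(ε * pm (B k - B (k+1))) else 0) := by
    have hpt : ∀ t ∈ range n, (max (C t - C (t+1)) 0 - max (B t - B (t+1)) 0)
        = (if t + 1 = j then ε * pp (B t - B (t+1)) else 0)
          + (if t = k then -(ε * pm (B t - B (t+1))) else 0) := by
      intro t ht
      by_cases h1 : t + 1 = j
      · have h2 : t ≠ k := by omega
        rw [if_pos h1, if_neg h2]
        obtain ⟨hc1, hc2⟩ := hjmem t h1
        have h' := hεj (by omega)
        rw [show j - 1 = t by omega, ← h1] at h'
        rw [hc1, hc2, show B t - (B (t+1) - ε) = B t - B (t+1) + ε by ring,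
          pos_add_eps hεpos h']
        ring
      · by_cases h2 : t = k
        · have hkn : k < n := h2 ▸ mem_range.1 ht
          rw [if_neg h1, if_pos h2, h2]
          rw [hkmemIn, hkmemOut hkn, show B k - ε - B (k+1) = B k - B (k+1) - ε by ring,
            pos_sub_eps hεpos (hεk hkn)]
          ring
        · rw [if_neg h1, if_neg h2, hmem t h1 h2]; ring
    rw [Finset.sum_congr rfl hpt, Finset.sum_add_distrib]
    congr 1
    · cases j with
      | zero => simp
      | succ j' =>
        have hj'n : j' ∈ range n := mem_range.2 (by omega)
        rw [if_neg (by omega : ¬ j' + 1 = 0)]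
        have : ∀ t ∈ range n, (if t + 1 = j' + 1 then ε * pp (B t - B (t+1)) else 0)
            = (if t = j' then ε * pp (B t - B (t+1)) else 0) := by
          intro t _
          by_cases h : t = j'
          · rw [if_pos (by omega), if_pos h]
          · rw [if_neg (by omega), if_neg h]
        rw [Finset.sum_congr rfl this, Finset.sum_ite_eq' (range n) j', if_pos hj'n]
        norm_num
    · rw [Finset.sum_ite_eq' (range n) k]
      by_cases hkn : k < n
      · rw [if_pos (mem_range.2 hkn), if_pos hkn]
      · rw [if_neg (by simpa [mem_range] using hkn), if_neg hkn]
  have expand : Gob n Y lF lL lNI C - Gob n Y lF lL lNI B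
      = (1/2) * (∑ t ∈ range (n+1), ((Y t - C t)^2 - (Y t - B t)^2))
        + lF * (∑ t ∈ range n, (|C t - C (t+1)| - |B t - B (t+1)|))
        + lL * (∑ t ∈ range (n+1), (|C t| - |B t|))
        + lNI * (∑ t ∈ range n, (max (C t - C (t+1)) 0 - max (B t - B (t+1)) 0)) := by
    unfold Gob
    rw [Finset.sum_sub_distrib, Finset.sum_sub_distrib, Finset.sum_sub_distrib,
      Finset.sum_sub_distrib]
    ring
  have hsum : ∑ t ∈ I, upE Y B lL t
      = (∑ t ∈ I, (Y t - B t)) - lL * ∑ t ∈ I, sm (B t) := by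
    rw [Finset.mul_sum, ← Finset.sum_sub_distrib]
    exact Finset.sum_congr rfl fun t _ => by unfold upE; ring
  have key : Gob n Y lF lL lNI C - Gob n Y lF lL lNI B = ε * L + ε^2 * ((I.card : ℝ)/2) := by
    rw [expand, hq, hl, hf, hni, hL, hApj, hAmk, hsum]
    by_cases hj0 : j = 0 <;> by_cases hkn : k < n <;>
      simp only [if_pos, if_neg, hj0, hkn, if_true, if_false] <;> ring
  have h0 := hmin C
  linarith [key]


section Wexist

variable (n : ℕ) (Y B : ℕ → ℝ) (lF lL lNI : ℝ)

noncomputable def LB (j k : ℕ) : ℝ :=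
  if j ≤ k then AmV n B lF lNI j + ∑ t ∈ Ico j k, dnE Y B lL t
  else AmV n B lF lNI j - ∑ t ∈ Ico k j, upE Y B lL t

noncomputable def wFun (k : ℕ) : ℝ :=
  (range (n+2)).sup' ⟨0, mem_range.2 (by omega)⟩ (fun j => LB n Y B lF lL lNI j k)

variable (hF : 0 ≤ lF) (hL : 0 ≤ lL) (hNI : 0 ≤ lNI)
variable (hmin : ∀ C : ℕ → ℝ, Gob n Y lF lL lNI B ≤ Gob n Y lF lL lNI C)

include hL in
theorem dnE_le_upE (t : ℕ) : dnE Y B lL t ≤ upE Y B lL t := by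
  unfold dnE upE
  have := sm_le_sp (B t)
  nlinarith

include hF hNI in
theorem AmV_le_ApV (k : ℕ) : AmV n B lF lNI k ≤ ApV n B lF lNI k := by
  unfold AmV ApV
  split
  · have h1 := sm_le_sp (B (k-1) - B k)
    have h2 := pm_le_pp (B (k-1) - B k)
    nlinarith
  · exact le_refl 0

include hF hNI hmin in
theorem hC2 (a b : ℕ) (hab : a ≤ b) (hb : b ≤ n+1) :
    AmV n B lF lNI a + ∑ t ∈ Ico a b, dnE Y B lL t ≤ ApV n B lF lNI b := by
  rcases eq_or_lt_of_le hab with rfl | hlt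
  · rw [Finset.Ico_self, Finset.sum_empty]
    simpa using AmV_le_ApV n B lF lNI (hF := hF) (hNI := hNI) a
  · obtain ⟨m, rfl⟩ : ∃ m, b = m + 1 := ⟨b - 1, by omega⟩
    rw [Finset.Ico_add_one_right_eq_Icc]
    have := cond_up n Y B lF lL lNI hmin a m (by omega) (by omega)
    linarith

include hF hNI hmin in
theorem hC1 (a b : ℕ) (hab : a ≤ b) (hb : b ≤ n+1) :
    AmV n B lF lNI b ≤ ApV n B lF lNI a + ∑ t ∈ Ico a b, upE Y B lL t := by
  rcases eq_or_lt_of_le hab with rfl | hlt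
  · rw [Finset.Ico_self, Finset.sum_empty]
    simpa using AmV_le_ApV n B lF lNI (hF := hF) (hNI := hNI) a
  · obtain ⟨m, rfl⟩ : ∃ m, b = m + 1 := ⟨b - 1, by omega⟩
    rw [Finset.Ico_add_one_right_eq_Icc]
    have := cond_dn n Y B lF lL lNI hmin a m (by omega) (by omega)
    linarith

include hF hNI hmin in
theorem w_le_ApV (k : ℕ) (hk : k ≤ n+1) :
    wFun n Y B lF lL lNI k ≤ ApV n B lF lNI k := by
  apply Finset.sup'_le
  intro j hj
  rw [mem_range] at hj
  unfold LB
  split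
  · have := hC2 n Y B lF lL lNI (hF := hF) (hNI := hNI) (hmin := hmin) j k (by assumption) hk
    linarith
  · rename_i hnle
    have hkj : k ≤ j := by omega
    have := hC1 n Y B lF lL lNI (hF := hF) (hNI := hNI) (hmin := hmin) k j hkj (by omega)
    linarith

theorem AmV_le_w (k : ℕ) (hk : k ≤ n+1) :
    AmV n B lF lNI k ≤ wFun n Y B lF lL lNI k := by
  have hmem : k ∈ range (n+2) := mem_range.2 (by omega)
  have h := Finset.le_sup' (fun j => LB n Y B lF lL lNI j k) hmem
  have e : LB n Y B lF lL lNI k k = AmV n B lF lNI k := by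
    unfold LB
    rw [if_pos (le_refl k), Finset.Ico_self, Finset.sum_empty, add_zero]
  rw [e] at h
  exact h

include hL in
theorem w_incr_hi (t : ℕ) (_ht : t ≤ n) :
    wFun n Y B lF lL lNI (t+1) ≤ wFun n Y B lF lL lNI t + upE Y B lL t := by
  apply Finset.sup'_le
  intro j hj
  rw [mem_range] at hj
  have hle : LB n Y B lF lL lNI j t ≤ wFun n Y B lF lL lNI t := by
    have := Finset.le_sup' (fun j => LB n Y B lF lL lNI j t) (mem_range.2 (by omega : j < n+2))
    exact this
  rcases lt_trichotomy j (t+1) with h | h | h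
  · have hjt : j ≤ t := by omega
    have e : LB n Y B lF lL lNI j (t+1) = LB n Y B lF lL lNI j t + dnE Y B lL t := by
      unfold LB
      rw [if_pos (by omega), if_pos hjt, Finset.sum_Ico_succ_top hjt]
      ring
    have hd := dnE_le_upE Y B lL (hL := hL) t
    rw [e]; linarith
  · subst h
    have e1 : LB n Y B lF lL lNI (t+1) (t+1) = AmV n B lF lNI (t+1) := by
      unfold LB
      rw [if_pos (le_refl _), Finset.Ico_self, Finset.sum_empty, add_zero]
    have e2 : LB n Y B lF lL lNI (t+1) t = AmV n B lF lNI (t+1) - upE Y B lL t := by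
      unfold LB
      rw [if_neg (by omega), Finset.sum_Ico_succ_top (le_refl t), Finset.Ico_self,
        Finset.sum_empty, zero_add]
    rw [e1]
    rw [e2] at hle
    linarith
  · have e : LB n Y B lF lL lNI j (t+1) = LB n Y B lF lL lNI j t + upE Y B lL t := by
      unfold LB
      rw [if_neg (by omega), if_neg (by omega),
        Finset.sum_eq_sum_Ico_succ_bot (by omega : t < j)]
      ring
    rw [e]; linarith

include hL in
theorem w_incr_lo (t : ℕ) (_ht : t ≤ n) :
    wFun n Y B lF lL lNI t + dnE Y B lL t ≤ wFun n Y B lF lL lNI (t+1) := by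
  obtain ⟨j, hjmem, hene⟩ := Finset.exists_mem_eq_sup' (⟨0, mem_range.2 (by omega)⟩ :
    (range (n+2)).Nonempty) (fun j => LB n Y B lF lL lNI j t)
  rw [mem_range] at hjmem
  have hub : LB n Y B lF lL lNI j (t+1) ≤ wFun n Y B lF lL lNI (t+1) := by
    have := Finset.le_sup' (fun j => LB n Y B lF lL lNI j (t+1)) (mem_range.2 (by omega : j < n+2))
    exact this
  have hd := dnE_le_upE Y B lL (hL := hL) t
  rcases lt_trichotomy j (t+1) with h | h | h
  · have hjt : j ≤ t := by omega
    have e : LB n Y B lF lL lNI j (t+1) = LB n Y B lF lL lNI j t + dnE Y B lL t := by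
      unfold LB
      rw [if_pos (by omega), if_pos hjt, Finset.sum_Ico_succ_top hjt]
      ring
    rw [wFun, hene, ← e]
    exact hub
  · subst h
    have e1 : LB n Y B lF lL lNI (t+1) (t+1) = AmV n B lF lNI (t+1) := by
      unfold LB
      rw [if_pos (le_refl _), Finset.Ico_self, Finset.sum_empty, add_zero]
    have e2 : LB n Y B lF lL lNI (t+1) t = AmV n B lF lNI (t+1) - upE Y B lL t := by
      unfold LB
      rw [if_neg (by omega), Finset.sum_Ico_succ_top (le_refl t), Finset.Ico_self,
        Finset.sum_empty, zero_add]
    rw [wFun, hene, e2]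
    rw [e1] at hub
    linarith
  · have e : LB n Y B lF lL lNI j (t+1) = LB n Y B lF lL lNI j t + upE Y B lL t := by
      unfold LB
      rw [if_neg (by omega), if_neg (by omega),
        Finset.sum_eq_sum_Ico_succ_bot (by omega : t < j)]
      ring
    rw [wFun, hene]
    rw [e] at hub
    linarith

include hF hL hNI hmin in
theorem exists_w : ∃ w : ℕ → ℝ, w 0 = 0 ∧ w (n+1) = 0 ∧
    (∀ t, t ≤ n → dnE Y B lL t ≤ w (t+1) - w t ∧ w (t+1) - w t ≤ upE Y B lL t) ∧
    (∀ k, 1 ≤ k → k ≤ n → AmV n B lF lNI k ≤ w k ∧ w k ≤ ApV n B lF lNI k) := by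
  refine ⟨wFun n Y B lF lL lNI, ?_, ?_, ?_, ?_⟩
  · have h1 := w_le_ApV n Y B lF lL lNI (hF := hF) (hNI := hNI) (hmin := hmin) 0 (by omega)
    have h2 := AmV_le_w n Y B lF lL lNI 0 (by omega)
    have e1 : ApV n B lF lNI 0 = 0 := by unfold ApV; rw [if_neg (by omega)]
    have e2 : AmV n B lF lNI 0 = 0 := by unfold AmV; rw [if_neg (by omega)]
    rw [e1] at h1; rw [e2] at h2; linarith
  · have h1 := w_le_ApV n Y B lF lL lNI (hF := hF) (hNI := hNI) (hmin := hmin) (n+1) (le_refl _)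
    have h2 := AmV_le_w n Y B lF lL lNI (n+1) (le_refl _)
    have e1 : ApV n B lF lNI (n+1) = 0 := by unfold ApV; rw [if_neg (by omega)]
    have e2 : AmV n B lF lNI (n+1) = 0 := by unfold AmV; rw [if_neg (by omega)]
    rw [e1] at h1; rw [e2] at h2; linarith
  · intro t ht
    have h1 := w_incr_lo n Y B lF lL lNI (hL := hL) t ht
    have h2 := w_incr_hi n Y B lF lL lNI (hL := hL) t ht
    constructor <;> linarith
  · intro k h1k hkn
    exact ⟨AmV_le_w n Y B lF lL lNI k (by omega),
      w_le_ApV n Y B lF lL lNI (hF := hF) (hNI := hNI) (hmin := hmin) k (by omega)⟩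

end Wexist


set_option maxHeartbeats 1000000 in
theorem endgame (n : ℕ) (Y B B' w w' : ℕ → ℝ) (lF lL lNI lNI' : ℝ)
    (hF : 0 ≤ lF) (hL : 0 ≤ lL) (hNI : 0 ≤ lNI) (hNN : lNI < lNI')
    (hw0 : w 0 = 0) (hwN : w (n+1) = 0)
    (hwi : ∀ t, t ≤ n → dnE Y B lL t ≤ w (t+1) - w t ∧ w (t+1) - w t ≤ upE Y B lL t)
    (hwp : ∀ k, 1 ≤ k → k ≤ n → AmV n B lF lNI k ≤ w k ∧ w k ≤ ApV n B lF lNI k)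
    (hw0' : w' 0 = 0) (hwN' : w' (n+1) = 0)
    (hwi' : ∀ t, t ≤ n → dnE Y B' lL t ≤ w' (t+1) - w' t ∧ w' (t+1) - w' t ≤ upE Y B' lL t)
    (hwp' : ∀ k, 1 ≤ k → k ≤ n → AmV n B' lF lNI' k ≤ w' k ∧ w' k ≤ ApV n B' lF lNI' k)
    (k₀ : ℕ) (hk₀1 : 1 ≤ k₀) (hk₀n : k₀ ≤ n) (hjoin : B (k₀ - 1) = B k₀) :
    B' (k₀ - 1) = B' k₀ := by
  set c : ℝ := lNI' - lNI with hcdef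
  have hc : 0 < c := by rw [hcdef]; linarith
  set Δ : ℕ → ℝ := fun k => w' k - w k with hΔdef
  have hΔa : ∀ k, Δ k = w' k - w k := fun _ => rfl
  have hΔ0 : Δ 0 = 0 := by rw [hΔa, hw0, hw0']; ring
  have hΔN : Δ (n+1) = 0 := by rw [hΔa, hwN, hwN']; ring
  -- sign lemmas for increments
  have hgA : ∀ t, t ≤ n → 0 < Δ (t+1) - Δ t → B' t ≤ B t := by
    intro t ht hg
    by_contra hcon
    push_neg at hcon
    have h1 := (hwi t ht).1
    have h2 := (hwi' t ht).2
    have h4 : lL * sp (B t) ≤ lL * sm (B' t) :=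
      mul_le_mul_of_nonneg_left (sp_le_sm hcon) hL
    unfold dnE at h1; unfold upE at h2
    rw [hΔa, hΔa] at hg
    linarith
  have hgB : ∀ t, t ≤ n → Δ (t+1) - Δ t < 0 → B t ≤ B' t := by
    intro t ht hg
    by_contra hcon
    push_neg at hcon
    have h1 := (hwi t ht).2
    have h2 := (hwi' t ht).1
    have h4 : lL * sp (B' t) ≤ lL * sm (B t) :=
      mul_le_mul_of_nonneg_left (sp_le_sm hcon) hL
    unfold upE at h1; unfold dnE at h2
    rw [hΔa, hΔa] at hg
    linarith
  have hgE : ∀ t, t ≤ n → Δ (t+1) - Δ t = 0 → B t = B' t := by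
    intro t ht hg
    by_cases h : B t < B' t
    · exfalso
      have h1 := (hwi t ht).1
      have h2 := (hwi' t ht).2
      have h4 : lL * sp (B t) ≤ lL * sm (B' t) :=
        mul_le_mul_of_nonneg_left (sp_le_sm h) hL
      unfold dnE at h1; unfold upE at h2
      rw [hΔa, hΔa] at hg
      linarith
    · by_cases h' : B' t < B t
      · exfalso
        have h1 := (hwi t ht).2
        have h2 := (hwi' t ht).1
        have h4 : lL * sp (B' t) ≤ lL * sm (B t) :=
          mul_le_mul_of_nonneg_left (sp_le_sm h') hL
        unfold upE at h1; unfold dnE at h2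
        rw [hΔa, hΔa] at hg
        linarith
      · linarith [le_of_not_gt h, le_of_not_gt h']
  -- bounds on w
  have hwlo : ∀ k, 1 ≤ k → k ≤ n → -lF ≤ w k := by
    intro k h1 h2
    have h0 := (hwp k h1 h2).1
    unfold AmV at h0
    rw [if_pos ⟨h1, h2⟩] at h0
    have e1 : lF * (-1) ≤ lF * sm (B (k-1) - B k) :=
      mul_le_mul_of_nonneg_left (neg_one_le_sm _) hF
    have e2 : 0 ≤ lNI * pm (B (k-1) - B k) := mul_nonneg hNI (pm_nonneg _)
    linarith
  have hwhi : ∀ k, 1 ≤ k → k ≤ n → w k ≤ lF + lNI := by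
    intro k h1 h2
    have h0 := (hwp k h1 h2).2
    unfold ApV at h0
    rw [if_pos ⟨h1, h2⟩] at h0
    have e1 : lF * sp (B (k-1) - B k) ≤ lF * 1 :=
      mul_le_mul_of_nonneg_left (sp_le_one _) hF
    have e2 : lNI * pp (B (k-1) - B k) ≤ lNI * 1 :=
      mul_le_mul_of_nonneg_left (pp_le_one _) hNI
    linarith
  have hwlo' : ∀ k, 1 ≤ k → k ≤ n → -lF ≤ w' k := by
    intro k h1 h2
    have h0 := (hwp' k h1 h2).1
    unfold AmV at h0
    rw [if_pos ⟨h1, h2⟩] at h0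
    have e1 : lF * (-1) ≤ lF * sm (B' (k-1) - B' k) :=
      mul_le_mul_of_nonneg_left (neg_one_le_sm _) hF
    have e2 : 0 ≤ lNI' * pm (B' (k-1) - B' k) := mul_nonneg (by linarith) (pm_nonneg _)
    linarith
  have hwhi' : ∀ k, 1 ≤ k → k ≤ n → w' k ≤ lF + lNI' := by
    intro k h1 h2
    have h0 := (hwp' k h1 h2).2
    unfold ApV at h0
    rw [if_pos ⟨h1, h2⟩] at h0
    have e1 : lF * sp (B' (k-1) - B' k) ≤ lF * 1 :=
      mul_le_mul_of_nonneg_left (sp_le_one _) hF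
    have e2 : lNI' * pp (B' (k-1) - B' k) ≤ lNI' * 1 :=
      mul_le_mul_of_nonneg_left (pp_le_one _) (by linarith)
    linarith
  have hpin_pos : ∀ k, 1 ≤ k → k ≤ n → 0 < B (k-1) - B k → w k = lF + lNI := by
    intro k h1 h2 hx
    have ha := (hwp k h1 h2).1
    have hb := (hwp k h1 h2).2
    unfold AmV at ha; unfold ApV at hb
    rw [if_pos ⟨h1, h2⟩] at ha hb
    rw [sm_one hx, pm_one hx] at ha
    rw [sp_one hx.le, pp_one hx.le] at hb
    linarith
  have hpin_neg : ∀ k, 1 ≤ k → k ≤ n → B (k-1) - B k < 0 → w k = -lF := by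
    intro k h1 h2 hx
    have ha := (hwp k h1 h2).1
    have hb := (hwp k h1 h2).2
    unfold AmV at ha; unfold ApV at hb
    rw [if_pos ⟨h1, h2⟩] at ha hb
    rw [sm_neg hx.le, pm_zero hx.le] at ha
    rw [sp_neg hx, pp_zero hx] at hb
    linarith
  have hpin_pos' : ∀ k, 1 ≤ k → k ≤ n → 0 < B' (k-1) - B' k → w' k = lF + lNI' := by
    intro k h1 h2 hx
    have ha := (hwp' k h1 h2).1
    have hb := (hwp' k h1 h2).2
    unfold AmV at ha; unfold ApV at hb
    rw [if_pos ⟨h1, h2⟩] at ha hb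
    rw [sm_one hx, pm_one hx] at ha
    rw [sp_one hx.le, pp_one hx.le] at hb
    linarith
  have hpin_neg' : ∀ k, 1 ≤ k → k ≤ n → B' (k-1) - B' k < 0 → w' k = -lF := by
    intro k h1 h2 hx
    have ha := (hwp' k h1 h2).1
    have hb := (hwp' k h1 h2).2
    unfold AmV at ha; unfold ApV at hb
    rw [if_pos ⟨h1, h2⟩] at ha hb
    rw [sm_neg hx.le, pm_zero hx.le] at ha
    rw [sp_neg hx, pp_zero hx] at hb
    linarith
  -- D-implications
  have hD1 : ∀ k, 1 ≤ k → k ≤ n → 0 < Δ k → 0 ≤ B' (k-1) - B' k := by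
    intro k h1 h2 hΔ
    by_contra hcon
    push_neg at hcon
    have hp := hpin_neg' k h1 h2 hcon
    have h3 := hwlo k h1 h2
    rw [hΔa, hp] at hΔ
    linarith
  have hD2 : ∀ k, 1 ≤ k → k ≤ n → c < Δ k → B (k-1) - B k ≤ 0 := by
    intro k h1 h2 hΔ
    by_contra hcon
    push_neg at hcon
    have hp := hpin_pos k h1 h2 hcon
    have h3 := hwhi' k h1 h2
    rw [hΔa, hp, hcdef] at hΔ
    linarith
  have hD3 : ∀ k, 1 ≤ k → k ≤ n → Δ k < 0 → 0 ≤ B (k-1) - B k := by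
    intro k h1 h2 hΔ
    by_contra hcon
    push_neg at hcon
    have hp := hpin_neg k h1 h2 hcon
    have h3 := hwlo' k h1 h2
    rw [hΔa, hp] at hΔ
    linarith
  have hD4 : ∀ k, 1 ≤ k → k ≤ n → Δ k < c → B' (k-1) - B' k ≤ 0 := by
    intro k h1 h2 hΔ
    by_contra hcon
    push_neg at hcon
    have hp := hpin_pos' k h1 h2 hcon
    have h3 := hwhi k h1 h2
    rw [hΔa, hp, hcdef] at hΔ
    linarith
  -- four monotone-chain claims
  have claimA' : ∀ k, 1 ≤ k → k ≤ n → c ≤ Δ k → B' (k-1) ≤ B (k-1) := by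
    intro k
    induction k using Nat.strong_induction_on with
    | _ k IH =>
      intro h1 h2 h3
      obtain ⟨p, rfl⟩ : ∃ p, k = p + 1 := ⟨k-1, by omega⟩
      simp only [Nat.add_sub_cancel]
      by_cases hcase : Δ p < Δ (p+1)
      · exact hgA p (by omega) (by linarith)
      · push_neg at hcase
        have hp1 : 1 ≤ p := by
          rcases Nat.eq_zero_or_pos p with h0 | h0
          · exfalso; rw [h0, hΔ0] at hcase; rw [h0] at h3; linarith
          · omega
        have hcp : c ≤ Δ p := le_trans h3 hcase
        have hIH := IH p (by omega) hp1 (by omega) hcp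
        by_cases hst : c < Δ p
        · have h5 := hD2 p hp1 (by omega) hst
          have h6 := hD1 p hp1 (by omega) (by linarith)
          linarith
        · have hΔp : Δ p = c := by linarith
          have hΔp1 : Δ (p+1) = c := by linarith
          have := hgE p (by omega) (by rw [hΔp1, hΔp]; ring)
          linarith
  have claimB' : ∀ m, ∀ k, 1 ≤ k → k ≤ n → n - k = m → c ≤ Δ k → B k ≤ B' k := by
    intro m
    induction m using Nat.strong_induction_on with
    | _ m IH =>
      intro k h1 h2 hm h3
      by_cases hcase : Δ (k+1) < Δ k
      · exact hgB k (by omega) (by linarith)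
      · push_neg at hcase
        have hkn : k < n := by
          rcases Nat.lt_or_ge k n with h0 | h0
          · exact h0
          · exfalso
            have hke : k = n := by omega
            rw [hke] at hcase h3
            rw [hΔN] at hcase
            linarith
        have hck1 : c ≤ Δ (k+1) := le_trans h3 hcase
        have hIH := IH (n - (k+1)) (by omega) (k+1) (by omega) (by omega) rfl hck1
        by_cases hst : c < Δ (k+1)
        · have h5 := hD2 (k+1) (by omega) (by omega) hst
          have h6 := hD1 (k+1) (by omega) (by omega) (by linarith)
          simp only [Nat.add_sub_cancel] at h5 h6
          linarith
        · have hΔk1 : Δ (k+1) = c := by linarith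
          have hΔk : Δ k = c := by linarith
          have := hgE k (by omega) (by rw [hΔk1, hΔk]; ring)
          linarith
  have claimA : ∀ k, 1 ≤ k → k ≤ n → Δ k ≤ 0 → B (k-1) ≤ B' (k-1) := by
    intro k
    induction k using Nat.strong_induction_on with
    | _ k IH =>
      intro h1 h2 h3
      obtain ⟨p, rfl⟩ : ∃ p, k = p + 1 := ⟨k-1, by omega⟩
      simp only [Nat.add_sub_cancel]
      by_cases hcase : Δ (p+1) < Δ p
      · exact hgB p (by omega) (by linarith)
      · push_neg at hcase
        rcases Nat.eq_zero_or_pos p with h0 | h0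
        · subst h0
          have hz : Δ (0+1) = 0 := by
            rw [hΔ0] at hcase; linarith
          have := hgE 0 (by omega) (by rw [hz, hΔ0]; ring)
          linarith
        · have hp1 : 1 ≤ p := h0
          have hcp : Δ p ≤ 0 := by linarith
          have hIH := IH p (by omega) hp1 (by omega) hcp
          by_cases hst : Δ p < 0
          · have h5 := hD3 p hp1 (by omega) hst
            have h6 := hD4 p hp1 (by omega) (by linarith)
            linarith
          · have hΔp : Δ p = 0 := by linarith
            have hΔp1 : Δ (p+1) = 0 := by linarith
            have := hgE p (by omega) (by rw [hΔp1, hΔp]; ring)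
            linarith
  have claimB : ∀ m, ∀ k, 1 ≤ k → k ≤ n → n - k = m → Δ k ≤ 0 → B' k ≤ B k := by
    intro m
    induction m using Nat.strong_induction_on with
    | _ m IH =>
      intro k h1 h2 hm h3
      by_cases hcase : Δ k < Δ (k+1)
      · exact hgA k (by omega) (by linarith)
      · push_neg at hcase
        rcases Nat.lt_or_ge k n with hkn | hkn
        · have hck1 : Δ (k+1) ≤ 0 := by linarith
          have hIH := IH (n - (k+1)) (by omega) (k+1) (by omega) (by omega) rfl hck1
          by_cases hst : Δ (k+1) < 0
          · have h5 := hD3 (k+1) (by omega) (by omega) hst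
            have h6 := hD4 (k+1) (by omega) (by omega) (by linarith)
            simp only [Nat.add_sub_cancel] at h5 h6
            linarith
          · have hΔk1 : Δ (k+1) = 0 := by linarith
            have hΔk : Δ k = 0 := by linarith
            have := hgE k (by omega) (by rw [hΔk1, hΔk]; ring)
            linarith
        · have hke : k = n := by omega
          subst hke
          have hΔn : Δ k = 0 := by
            rw [hΔN] at hcase; linarith
          have := hgE k (le_refl k) (by rw [hΔN, hΔn]; ring)
          linarith
  -- final trichotomy at pair k₀
  rcases lt_trichotomy (B' (k₀ - 1) - B' k₀) 0 with hlt | heq | hgt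
  · exfalso
    have hpin := hpin_neg' k₀ hk₀1 hk₀n hlt
    have hlo := hwlo k₀ hk₀1 hk₀n
    have hΔk₀ : Δ k₀ ≤ 0 := by rw [hΔa, hpin]; linarith
    have hA := claimA k₀ hk₀1 hk₀n hΔk₀
    have hB := claimB (n - k₀) k₀ hk₀1 hk₀n rfl hΔk₀
    linarith
  · linarith
  · exfalso
    have hpin := hpin_pos' k₀ hk₀1 hk₀n hgt
    have hhi := hwhi k₀ hk₀1 hk₀n
    have hΔk₀ : c ≤ Δ k₀ := by rw [hΔa, hpin, hcdef]; linarith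
    have hA := claimA' k₀ hk₀1 hk₀n hΔk₀
    have hB := claimB' (n - k₀) k₀ hk₀1 hk₀n rfl hΔk₀
    linarith


end NIJoin

/-- Increasing the nearly-isotonic penalty `λ_NI` can only join constant regions of the
one-dimensional fused lasso nearly-isotonic solution, not split them. -/
theorem niParam_joins_groups {n : ℕ} (y : Fin (n + 1) → ℝ)
    (lF lL lNI lNI' : ℝ) (hF : 0 ≤ lF) (hL : 0 ≤ lL) (hNI : 0 ≤ lNI) (hNN : lNI < lNI')
    (b b' : Fin (n + 1) → ℝ)
    (hb : ∀ β, flni1 y lF lL lNI b ≤ flni1 y lF lL lNI β)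
    (hb' : ∀ β, flni1 y lF lL lNI' b' ≤ flni1 y lF lL lNI' β)
    (i : Fin n) (hjoin : b i.castSucc = b i.succ) :
    b' i.castSucc = b' i.succ := by
  classical
  open NIJoin in
  have hNI' : 0 ≤ lNI' := le_trans hNI hNN.le
  set Y : ℕ → ℝ := NIJoin.ext y with hY
  set Bb : ℕ → ℝ := NIJoin.ext b with hBb
  set Bb' : ℕ → ℝ := NIJoin.ext b' with hBb'
  have hextC : ∀ C : ℕ → ℝ, ∀ t, t ≤ n →
      NIJoin.ext (fun i : Fin (n+1) => C i.val) t = C t := by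
    intro C t ht
    have h : t < n + 1 := by omega
    simp [NIJoin.ext, h]
  have hminb : ∀ C : ℕ → ℝ,
      NIJoin.Gob n Y lF lL lNI Bb ≤ NIJoin.Gob n Y lF lL lNI C := by
    intro C
    have h1 := hb (fun i : Fin (n+1) => C i.val)
    rw [NIJoin.flni1_eq_Gob, NIJoin.flni1_eq_Gob] at h1
    calc NIJoin.Gob n Y lF lL lNI Bb
        ≤ NIJoin.Gob n Y lF lL lNI (NIJoin.ext (fun i : Fin (n+1) => C i.val)) := h1
      _ = NIJoin.Gob n Y lF lL lNI C :=
          NIJoin.Gob_congr n Y lF lL lNI _ _ (hextC C)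
  have hminb' : ∀ C : ℕ → ℝ,
      NIJoin.Gob n Y lF lL lNI' Bb' ≤ NIJoin.Gob n Y lF lL lNI' C := by
    intro C
    have h1 := hb' (fun i : Fin (n+1) => C i.val)
    rw [NIJoin.flni1_eq_Gob, NIJoin.flni1_eq_Gob] at h1
    calc NIJoin.Gob n Y lF lL lNI' Bb'
        ≤ NIJoin.Gob n Y lF lL lNI' (NIJoin.ext (fun i : Fin (n+1) => C i.val)) := h1
      _ = NIJoin.Gob n Y lF lL lNI' C :=
          NIJoin.Gob_congr n Y lF lL lNI' _ _ (hextC C)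
  obtain ⟨w, hw0, hwN, hwi, hwp⟩ :=
    NIJoin.exists_w n Y Bb lF lL lNI (hF := hF) (hL := hL) (hNI := hNI) (hmin := hminb)
  obtain ⟨w', hw0', hwN', hwi', hwp'⟩ :=
    NIJoin.exists_w n Y Bb' lF lL lNI' (hF := hF) (hL := hL) (hNI := hNI') (hmin := hminb')
  have hk₀n : (i : ℕ) + 1 ≤ n := i.isLt
  have hjoinN : Bb ((i : ℕ) + 1 - 1) = Bb ((i : ℕ) + 1) := by
    simp only [Nat.add_sub_cancel]
    rw [hBb, NIJoin.ext_castSucc, NIJoin.ext_succ]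
    exact hjoin
  have hend := NIJoin.endgame n Y Bb Bb' w w' lF lL lNI lNI' hF hL hNI hNN
    hw0 hwN hwi hwp hw0' hwN' hwi' hwp' ((i : ℕ) + 1) (by omega) hk₀n hjoinN
  simp only [Nat.add_sub_cancel] at hend
  rw [hBb', NIJoin.ext_castSucc, NIJoin.ext_succ] at hend
  exact hend
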